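/- Define γ : [0,1] → ℝ² by γ(t) = (2πt, 0) for t ∈ [0,1/2) and γ(t) = (π, π − 2πt) for t ∈ [1/2,1]. Then γ is a path from (0,0) to (π,−π), and for every t ∈ [0,1] the point γ(t) lies in A₁ ∪ B₁ ∪ A₂, i.e., Re φ(γ(t)) ≥ 1/10, or Re φ(γ(t)) ≤ −1/10, or Im φ(γ(t)) ≥ 1/10. -/

import Mathlib

open Real

/-- The function `φ(x,y) = (1/3)(e^{ix} + e^{iy} + e^{i(x+y)})`. -/
noncomputable def phi : ℝ × ℝ → ℂ := fun p =>
  (1 / 3) * (Complex.exp (Complex.I * p.1) + Complex.exp (Complex.I * p.2) +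
    Complex.exp (Complex.I * (p.1 + p.2)))

/-- `A₁ = {(x,y) ∈ [−π,π]² : Re φ(x,y) ≥ 1/10}`. -/
noncomputable def A1 : Set (ℝ × ℝ) :=
  {p | p ∈ Set.Icc (-π) π ×ˢ Set.Icc (-π) π ∧ (phi p).re ≥ 1 / 10}

/-- `B₁ = {(x,y) ∈ [−π,π]² : Re φ(x,y) ≤ −1/10}`. -/
noncomputable def B1 : Set (ℝ × ℝ) :=
  {p | p ∈ Set.Icc (-π) π ×ˢ Set.Icc (-π) π ∧ (phi p).re ≤ -(1 / 10)}

/-- `A₂ = {(x,y) ∈ [−π,π]² : Im φ(x,y) ≥ 1/10}`. -/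
noncomputable def A2 : Set (ℝ × ℝ) :=
  {p | p ∈ Set.Icc (-π) π ×ˢ Set.Icc (-π) π ∧ (phi p).im ≥ 1 / 10}

/-- The path `γ(t) = (2πt, 0)` for `t < 1/2`, `γ(t) = (π, π − 2πt)` for `t ≥ 1/2`. -/
noncomputable def gamma : ℝ → ℝ × ℝ := fun t =>
  if t < 1 / 2 then (2 * π * t, 0) else (π, π - 2 * π * t)

/-!
On the first leg `γ(t) = (x, 0)` with `x ∈ [0, π]`, so `φ = (1 + 2e^{ix})/3`. Its real part lies
in `(-1/10, 1/10)` only when `cos x` is within `3/20` of `-1/2`; there `sin x ≥ 0` is bounded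
away from `0`, which pushes the imaginary part above `1/10`. On the second leg the first
coordinate is `π`, where `e^{iπ} = -1` makes `φ ≡ -1/3`.
-/

lemma phi_mk_zero (x : ℝ) : phi (x, 0) = (2 * Complex.exp (x * Complex.I) + 1) / 3 := by
  simp only [phi, mul_comm Complex.I, Complex.ofReal_zero, zero_mul, add_zero, Complex.exp_zero]
  ring

lemma phi_re_mk_zero (x : ℝ) : (phi (x, 0)).re = (2 * cos x + 1) / 3 := by
  simp [phi_mk_zero, Complex.exp_ofReal_mul_I_re]

lemma phi_im_mk_zero (x : ℝ) : (phi (x, 0)).im = 2 * sin x / 3 := by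
  simp [phi_mk_zero, Complex.exp_ofReal_mul_I_im]

lemma phi_pi_mk (y : ℝ) : phi (π, y) = -1 / 3 := by
  simp only [phi]
  rw [mul_add Complex.I, Complex.exp_add, mul_comm Complex.I ((π : ℝ) : ℂ), Complex.exp_pi_mul_I]
  ring

lemma phi_mk_zero_re_or_im_large {x : ℝ} (hx : 0 ≤ sin x) :
    1 / 10 ≤ (phi (x, 0)).re ∨ (phi (x, 0)).re ≤ -(1 / 10) ∨ 1 / 10 ≤ (phi (x, 0)).im := by
  rw [phi_re_mk_zero, phi_im_mk_zero]
  by_contra! ⟨hre_lt, hre_gt, him_lt⟩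
  nlinarith [sin_sq_add_cos_sq x]

lemma mk_zero_mem_A1_union_B1_union_A2 {x : ℝ} (hx : x ∈ Set.Icc 0 π) :
    ((x, 0) : ℝ × ℝ) ∈ A1 ∪ B1 ∪ A2 := by
  have hsquare : ((x, 0) : ℝ × ℝ) ∈ Set.Icc (-π) π ×ˢ Set.Icc (-π) π :=
    ⟨⟨by linarith [hx.1, pi_pos], hx.2⟩, by simp [pi_pos.le]⟩
  rcases phi_mk_zero_re_or_im_large (sin_nonneg_of_nonneg_of_le_pi hx.1 hx.2) with h | h | h
  · exact .inl (.inl ⟨hsquare, h⟩)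
  · exact .inl (.inr ⟨hsquare, h⟩)
  · exact .inr ⟨hsquare, h⟩

lemma pi_mk_mem_B1 {y : ℝ} (hy : y ∈ Set.Icc (-π) π) : ((π, y) : ℝ × ℝ) ∈ B1 := by
  refine ⟨⟨⟨by linarith [pi_pos], le_rfl⟩, hy⟩, ?_⟩
  rw [phi_pi_mk]
  norm_num

lemma continuous_gamma : Continuous gamma := by
  refine Continuous.if (fun t ht => ?_) (by fun_prop) (by fun_prop)
  obtain rfl : t = 1 / 2 := frontier_lt_subset_eq continuous_id continuous_const ht
  ext <;> ring

/-- `γ` is a path from `(0,0)` to `(π,−π)` staying in `A₁ ∪ B₁ ∪ A₂`. -/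
theorem gamma_path_in_A1_B1_A2 :
    gamma 0 = (0, 0) ∧ gamma 1 = (π, -π) ∧
    ContinuousOn gamma (Set.Icc 0 1) ∧
    (∀ t ∈ Set.Icc (0 : ℝ) 1, gamma t ∈ A1 ∪ B1 ∪ A2) := by
  refine ⟨by norm_num [gamma], by norm_num [gamma]; ring, continuous_gamma.continuousOn, ?_⟩
  rintro t ⟨ht0, ht1⟩
  have hpi := pi_pos
  unfold gamma
  split_ifs with ht
  · exact mk_zero_mem_A1_union_B1_union_A2 ⟨by positivity, by nlinarith⟩
  · exact .inl (.inr (pi_mk_mem_B1 ⟨by nlinarith, by nlinarith⟩))
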